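/- For every shape parameter λ < 0, the tail of the skew normal distribution satisfies (1 - F_λ(x)) · (-λ) π (1 + λ²) x² · exp((1+λ²)x²/2) → 1 as x → ∞; that is, 1 - F_λ(x) is asymptotically equal to exp(-(1+λ²)x²/2) / ((-λ) π (1+λ²) x²) as x → ∞. -/

import Mathlib

open Real MeasureTheory Filter Topology

/-- Standard normal density. -/
noncomputable def stdPhi (x : ℝ) : ℝ := (Real.sqrt (2 * Real.pi))⁻¹ * Real.exp (-(x ^ 2) / 2)

/-- Standard normal cdf. -/
noncomputable def stdCdf (x : ℝ) : ℝ := ∫ t in Set.Iic x, stdPhi t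

/-- Skew normal density with shape parameter l. -/
noncomputable def snPdf (l x : ℝ) : ℝ := 2 * stdPhi x * stdCdf (l * x)

/-- Skew normal cdf with shape parameter l. -/
noncomputable def snCdf (l x : ℝ) : ℝ := ∫ t in Set.Iic x, snPdf l t

/-- Gumbel extreme value distribution function. -/
noncomputable def gumbel (x : ℝ) : ℝ := Real.exp (-Real.exp (-x))

/-!
Write `1 - F_λ(x) = ∫_x^∞ 2 φ(t) Φ(λt) dt` and compare it, by L'Hôpital's rule, with
`g(x) = exp(-(1+λ²)x²/2) / ((-λ) π (1+λ²) x²)`. Since `φ(t) φ(λt) = exp(-(1+λ²)t²/2) / (2π)`,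
the ratio of derivatives is `(-λt) Φ(λt) / φ(λt) · (1+λ²)t² / ((1+λ²)t² + 2)`, and its first
factor tends to `1` by Mills' ratio `1 - Φ(y) ∼ φ(y) / y`, itself another instance of L'Hôpital.
-/

open ProbabilityTheory

lemma stdPhi_eq_gaussianPDFReal : stdPhi = gaussianPDFReal 0 1 := by
  ext x
  simp [stdPhi, gaussianPDFReal]

lemma stdPhi_pos (x : ℝ) : 0 < stdPhi x :=
  stdPhi_eq_gaussianPDFReal ▸ gaussianPDFReal_pos 0 1 x one_ne_zero

lemma stdPhi_neg (x : ℝ) : stdPhi (-x) = stdPhi x := by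
  simp [stdPhi]

lemma continuous_stdPhi : Continuous stdPhi := by
  unfold stdPhi
  fun_prop

lemma integrable_stdPhi : Integrable stdPhi :=
  stdPhi_eq_gaussianPDFReal ▸ integrable_gaussianPDFReal 0 1

lemma integral_stdPhi : ∫ x, stdPhi x = 1 :=
  stdPhi_eq_gaussianPDFReal ▸ integral_gaussianPDFReal_eq_one 0 one_ne_zero

lemma hasDerivAt_stdPhi (x : ℝ) : HasDerivAt stdPhi (-x * stdPhi x) x := by
  refine ((((hasDerivAt_pow 2 x).neg).div_const 2).exp.const_mul (√(2 * π))⁻¹).congr_deriv ?_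
  simp only [stdPhi, Pi.neg_apply]
  ring

lemma stdPhi_mul_stdPhi_mul (l x : ℝ) :
    stdPhi x * stdPhi (l * x) = (2 * π)⁻¹ * exp (-((1 + l ^ 2) * x ^ 2) / 2) := by
  have h2π : √(2 * π) * √(2 * π) = 2 * π := mul_self_sqrt (by positivity)
  simp only [stdPhi]
  rw [mul_mul_mul_comm, ← mul_inv, h2π, ← exp_add]
  ring_nf

lemma tendsto_exp_neg_mul_sq_div_two_atTop {a : ℝ} (ha : 0 < a) :
    Tendsto (fun x : ℝ => exp (-(a * x ^ 2) / 2)) atTop (𝓝 0) :=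
  tendsto_exp_atBot.comp <| (tendsto_neg_atTop_atBot.comp <|
    (tendsto_pow_atTop two_ne_zero).const_mul_atTop ha).atBot_div_const two_pos

lemma tendsto_stdPhi_atTop : Tendsto stdPhi atTop (𝓝 0) := by
  have h := (tendsto_exp_neg_mul_sq_div_two_atTop one_pos).const_mul (√(2 * π))⁻¹
  rw [mul_zero] at h
  exact h.congr fun x => by rw [one_mul, stdPhi]

section IntegralIic

variable {E : Type*} [NormedAddCommGroup E] [NormedSpace ℝ E] {f : ℝ → E}

lemma hasDerivAt_integral_Iic [CompleteSpace E] (hf : Integrable f) (hc : Continuous f) (x : ℝ) :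
    HasDerivAt (fun u => ∫ t in Set.Iic u, f t) (f x) x := by
  have hsplit : (fun u => ∫ t in Set.Iic u, f t)
      = fun u => (∫ t in Set.Iic 0, f t) + ∫ t in (0 : ℝ)..u, f t := by
    funext u
    rw [← intervalIntegral.integral_Iic_sub_Iic hf.integrableOn hf.integrableOn]
    abel
  rw [hsplit]
  exact (intervalIntegral.integral_hasDerivAt_right hf.intervalIntegrable
    hc.stronglyMeasurable.stronglyMeasurableAtFilter hc.continuousAt).const_add _

lemma tendsto_integral_Iic_atTop (hf : Integrable f) :
    Tendsto (fun u => ∫ t in Set.Iic u, f t) atTop (𝓝 (∫ t, f t)) :=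
  (aecover_Iic tendsto_id).integral_tendsto_of_countably_generated hf

end IntegralIic

lemma hasDerivAt_stdCdf (x : ℝ) : HasDerivAt stdCdf (stdPhi x) x :=
  hasDerivAt_integral_Iic integrable_stdPhi continuous_stdPhi x

lemma continuous_stdCdf : Continuous stdCdf :=
  continuous_iff_continuousAt.2 fun x => (hasDerivAt_stdCdf x).continuousAt

lemma stdCdf_nonneg (x : ℝ) : 0 ≤ stdCdf x :=
  setIntegral_nonneg measurableSet_Iic fun t _ => (stdPhi_pos t).le

lemma stdCdf_le_one (x : ℝ) : stdCdf x ≤ 1 :=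
  integral_stdPhi ▸
    setIntegral_le_integral integrable_stdPhi (ae_of_all _ fun t => (stdPhi_pos t).le)

lemma stdCdf_neg (x : ℝ) : stdCdf (-x) = 1 - stdCdf x := by
  have hIoi : stdCdf (-x) = ∫ t in Set.Ioi x, stdPhi t := by
    have h := integral_comp_neg_Iic (-x) stdPhi
    simp only [stdPhi_neg, neg_neg] at h
    exact h
  rw [hIoi, ← integral_stdPhi, ← intervalIntegral.integral_Iic_add_Ioi
    integrable_stdPhi.integrableOn integrable_stdPhi.integrableOn, stdCdf]
  ring

lemma tendsto_stdCdf_atTop : Tendsto stdCdf atTop (𝓝 1) :=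
  integral_stdPhi ▸ tendsto_integral_Iic_atTop integrable_stdPhi

lemma tendsto_div_add_const_atTop (c : ℝ) : Tendsto (fun t : ℝ => t / (t + c)) atTop (𝓝 1) := by
  have h : Tendsto (fun t : ℝ => 1 - c / (t + c)) atTop (𝓝 (1 - 0)) :=
    (tendsto_const_nhds.div_atTop (tendsto_atTop_add_const_right _ c tendsto_id)).const_sub 1
  rw [sub_zero] at h
  refine h.congr' ?_
  filter_upwards [eventually_gt_atTop (-c)] with t ht
  field_simp [(neg_lt_iff_pos_add.1 ht).ne']
  ring

lemma tendsto_stdCdf_neg_div_stdPhi_div_atTop :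
    Tendsto (fun y => stdCdf (-y) / (stdPhi y / y)) atTop (𝓝 1) := by
  have hderiv_ne : ∀ y : ℝ, 0 < y → -stdPhi y * (y ^ 2 + 1) / y ^ 2 ≠ 0 := fun y hy =>
    div_ne_zero (mul_ne_zero (neg_ne_zero.2 (stdPhi_pos y).ne') (by positivity)) (by positivity)
  refine HasDerivAt.lhopital_zero_atTop (f' := fun y => -stdPhi y)
    (g' := fun y => -stdPhi y * (y ^ 2 + 1) / y ^ 2) ?_ ?_ ?_ ?_ ?_ ?_
  · refine Eventually.of_forall fun y => ?_
    refine ((hasDerivAt_stdCdf (-y)).comp y (hasDerivAt_neg y)).congr_deriv ?_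
    rw [stdPhi_neg]
    ring
  · filter_upwards [eventually_gt_atTop 0] with y hy
    refine ((hasDerivAt_stdPhi y).div (hasDerivAt_id y) hy.ne').congr_deriv ?_
    simp only [id]
    field_simp
    ring
  · filter_upwards [eventually_gt_atTop 0] with y hy using hderiv_ne y hy
  · simpa [stdCdf_neg] using tendsto_stdCdf_atTop.const_sub 1
  · exact tendsto_stdPhi_atTop.div_atTop tendsto_id
  · refine (tendsto_div_add_const_atTop 1).comp (tendsto_pow_atTop two_ne_zero) |>.congr' ?_
    filter_upwards [eventually_gt_atTop 0] with y hy
    rw [Function.comp_apply, eq_div_iff (hderiv_ne y hy)]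
    field_simp [(stdPhi_pos y).ne']

lemma continuous_snPdf (l : ℝ) : Continuous (snPdf l) :=
  (continuous_const.mul continuous_stdPhi).mul (continuous_stdCdf.comp (continuous_const_mul l))

lemma snPdf_nonneg (l x : ℝ) : 0 ≤ snPdf l x :=
  mul_nonneg (mul_nonneg zero_le_two (stdPhi_pos x).le) (stdCdf_nonneg _)

lemma snPdf_le (l x : ℝ) : snPdf l x ≤ 2 * stdPhi x :=
  mul_le_of_le_one_right (by positivity [stdPhi_pos x]) (stdCdf_le_one _)

lemma integrable_snPdf (l : ℝ) : Integrable (snPdf l) :=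
  (integrable_stdPhi.const_mul 2).mono (continuous_snPdf l).aestronglyMeasurable <|
    ae_of_all _ fun x => by
      rw [norm_of_nonneg (snPdf_nonneg l x), norm_of_nonneg (by positivity [stdPhi_pos x])]
      exact snPdf_le l x

lemma snPdf_neg_add (l x : ℝ) : snPdf l (-x) + snPdf l x = 2 * stdPhi x := by
  simp only [snPdf, stdPhi_neg, mul_neg, stdCdf_neg]
  ring

lemma integral_snPdf (l : ℝ) : ∫ x, snPdf l x = 1 := by
  have hsum : ∫ x, (snPdf l (-x) + snPdf l x) = 2 := by
    simp_rw [snPdf_neg_add, integral_const_mul, integral_stdPhi, mul_one]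
  rw [integral_add (integrable_snPdf l).comp_neg (integrable_snPdf l),
    integral_neg_eq_self (snPdf l)] at hsum
  linarith

lemma hasDerivAt_snCdf (l x : ℝ) : HasDerivAt (snCdf l) (snPdf l x) x :=
  hasDerivAt_integral_Iic (integrable_snPdf l) (continuous_snPdf l) x

lemma tendsto_one_sub_snCdf_atTop (l : ℝ) : Tendsto (fun x => 1 - snCdf l x) atTop (𝓝 0) := by
  have h := (tendsto_integral_Iic_atTop (integrable_snPdf l)).const_sub 1
  rwa [integral_snPdf, sub_self] at h

lemma hasDerivAt_exp_neg_mul_sq_div_mul_sq (a : ℝ) {c x : ℝ} (hc : c ≠ 0) (hx : x ≠ 0) :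
    HasDerivAt (fun x => exp (-(a * x ^ 2) / 2) / (c * x ^ 2))
      (-(exp (-(a * x ^ 2) / 2) * (a * x ^ 2 + 2)) / (c * x ^ 3)) x := by
  refine ((((hasDerivAt_pow 2 x).const_mul a).neg.div_const 2).exp.div
    ((hasDerivAt_pow 2 x).const_mul c) (by positivity)).congr_deriv ?_
  simp only [Pi.neg_apply]
  field_simp
  ring

lemma tendsto_exp_neg_mul_sq_div_mul_sq_atTop {a c : ℝ} (ha : 0 < a) (hc : 0 < c) :
    Tendsto (fun x => exp (-(a * x ^ 2) / 2) / (c * x ^ 2)) atTop (𝓝 0) :=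
  (tendsto_exp_neg_mul_sq_div_two_atTop ha).div_atTop
    ((tendsto_pow_atTop two_ne_zero).const_mul_atTop hc)

lemma tendsto_snPdf_div_atTop {l : ℝ} (hl : l < 0) :
    Tendsto (fun x => snPdf l x / (exp (-((1 + l ^ 2) * x ^ 2) / 2) *
      ((1 + l ^ 2) * x ^ 2 + 2) / (-l * π * (1 + l ^ 2) * x ^ 3))) atTop (𝓝 1) := by
  have hmills := tendsto_stdCdf_neg_div_stdPhi_div_atTop.comp
    (tendsto_id.const_mul_atTop (neg_pos.2 hl))
  have hfrac := (tendsto_div_add_const_atTop 2).comp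
    ((tendsto_pow_atTop two_ne_zero).const_mul_atTop (by positivity : (0 : ℝ) < 1 + l ^ 2))
  refine (mul_one (1 : ℝ) ▸ hmills.mul hfrac).congr' ?_
  filter_upwards [eventually_gt_atTop 0] with x hx
  have hexp : exp (-((1 + l ^ 2) * x ^ 2) / 2) = 2 * π * (stdPhi x * stdPhi (-l * x)) := by
    rw [stdPhi_mul_stdPhi_mul, neg_sq]
    field_simp
  have hφx := stdPhi_pos x
  have hφlx := stdPhi_pos (-l * x)
  simp only [Function.comp_apply, id, snPdf, hexp, neg_mul, neg_neg]
  field_simp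

theorem skew_normal_tail_neg (l : ℝ) (hl : l < 0) :
    Tendsto (fun x : ℝ =>
      (1 - snCdf l x) * (-l) * Real.pi * (1 + l ^ 2) * x ^ 2 *
        Real.exp ((1 + l ^ 2) * x ^ 2 / 2)) atTop (𝓝 1) := by
  have ha : 0 < 1 + l ^ 2 := by positivity
  have hc : 0 < -l * π * (1 + l ^ 2) := mul_pos (mul_pos (neg_pos.2 hl) pi_pos) ha
  have hlhopital := HasDerivAt.lhopital_zero_atTop
    (Eventually.of_forall fun x => (hasDerivAt_snCdf l x).const_sub 1)
    ((eventually_ne_atTop 0).mono fun x hx =>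
      hasDerivAt_exp_neg_mul_sq_div_mul_sq (1 + l ^ 2) hc.ne' hx)
    ((eventually_gt_atTop 0).mono fun x hx =>
      div_ne_zero (neg_ne_zero.2 (by positivity)) (by positivity))
    (tendsto_one_sub_snCdf_atTop l) (tendsto_exp_neg_mul_sq_div_mul_sq_atTop ha hc)
    ((tendsto_snPdf_div_atTop hl).congr fun x => by
      rw [neg_div (-l * π * (1 + l ^ 2) * x ^ 3), neg_div_neg_eq])
  refine hlhopital.congr' ?_
  filter_upwards [eventually_ne_atTop 0] with x hx
  rw [neg_div, exp_neg]
  field_simp
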